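/- arXiv:1210.7311 — 3 statements merged into one kernel-verified Lean document; each statement's English description precedes it below -/
import Mathlib

section
/- Let 5/6 < θ < 1 and set φ₂(t) = (5/(6θ))·(1 + √((6θ−5)/3)·(2(t−1/2))^{1/3}) and φ₃(t) = (5/(6θ))·(1 − √((6θ−5)/3)·(2(t−1/2))^{1/3}) for t ∈ [0,1]. Then φ₂ and φ₃ are strictly positive on [0,1] and satisfy ∫₀¹ (1 + θ(4(t−1/2)(u−1/2))^{1/3}) φᵢ(u)² du = φᵢ(t) for all t ∈ [0,1], i = 2,3. -/
/-!
Write `b t = cbrt (2 (t - 1/2))`. The kernel factorises, `cbrt (4 (t - 1/2) (u - 1/2)) = b t * b u`,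
so the Hammerstein operator maps the family `A (1 + s b)` into itself, and only the moments of `b`
on `[0, 1]` enter: `∫ b = ∫ b³ = 0` by oddness about `1/2`, and `∫ b² = 3/5`. Matching coefficients
of `1` and `b t` gives `A = 5 / (6θ)` and `s² = (6θ - 5) / 3`; positivity holds because `|b| ≤ 1` and
`s² < 1`.
-/

open MeasureTheory Set

noncomputable def cbrt (x : ℝ) : ℝ := Real.sign x * |x| ^ ((1:ℝ)/3)

lemma Real.sign_mul (x y : ℝ) : Real.sign (x * y) = Real.sign x * Real.sign y := by
  rcases lt_trichotomy x 0 with hx | hx | hx <;> rcases lt_trichotomy y 0 with hy | hy | hy <;>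
    simp [Real.sign_of_neg, Real.sign_of_pos, hx, hy, mul_pos_of_neg_of_neg,
      mul_neg_of_neg_of_pos, mul_neg_of_pos_of_neg]

lemma cbrt_zero : cbrt 0 = 0 := by simp [cbrt]

lemma abs_cbrt (x : ℝ) : |cbrt x| = |x| ^ ((1:ℝ)/3) := by
  rcases eq_or_ne x 0 with rfl | hx
  · simp [cbrt_zero]
  · rcases Real.sign_apply_eq_of_ne_zero x hx with h | h <;>
      simp [cbrt, h, abs_of_nonneg (Real.rpow_nonneg (abs_nonneg x) _)]

lemma abs_cbrt_le_one {x : ℝ} (hx : |x| ≤ 1) : |cbrt x| ≤ 1 := by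
  rw [abs_cbrt]
  exact Real.rpow_le_one (abs_nonneg x) hx (by norm_num)

lemma cbrt_mul (x y : ℝ) : cbrt (x * y) = cbrt x * cbrt y := by
  simp only [cbrt, Real.sign_mul, abs_mul, Real.mul_rpow (abs_nonneg x) (abs_nonneg y)]
  ring

lemma cbrt_neg (x : ℝ) : cbrt (-x) = -cbrt x := by
  simp [cbrt, Real.sign_neg]

lemma cbrt_pow_three (x : ℝ) : cbrt x ^ 3 = x := by
  rcases lt_trichotomy x 0 with hx | rfl | hx
  · have h : (|x| ^ ((1:ℝ)/3)) ^ 3 = -x := by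
      rw [← Real.rpow_natCast, ← Real.rpow_mul (abs_nonneg x), abs_of_neg hx]; norm_num
    rw [cbrt, Real.sign_of_neg hx, mul_pow, h]; ring
  · simp [cbrt_zero]
  · have h : (|x| ^ ((1:ℝ)/3)) ^ 3 = x := by
      rw [← Real.rpow_natCast, ← Real.rpow_mul (abs_nonneg x), abs_of_pos hx]; norm_num
    rw [cbrt, Real.sign_of_pos hx, mul_pow, h]; ring

lemma cbrt_sq (x : ℝ) : cbrt x ^ 2 = |x| ^ ((2:ℝ)/3) := by
  rw [← sq_abs, abs_cbrt, ← Real.rpow_natCast, ← Real.rpow_mul (abs_nonneg x)]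
  norm_num

lemma continuous_cbrt : Continuous cbrt := by
  have habs : Continuous fun y : ℝ => |y| ^ ((1:ℝ)/3) :=
    continuous_abs.rpow_const fun _ => Or.inr (by norm_num)
  rw [continuous_iff_continuousAt]
  intro x
  rcases lt_trichotomy x 0 with hx | rfl | hx
  · refine habs.continuousAt.neg.congr ?_
    filter_upwards [Iio_mem_nhds hx] with y hy
    simp [cbrt, Real.sign_of_neg (show y < 0 from hy)]
  · -- `Real.sign` jumps at `0`, but `|cbrt y| = |y| ^ (1/3)` tends to `0` there.
    rw [ContinuousAt, cbrt_zero, tendsto_zero_iff_abs_tendsto_zero]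
    simpa [Function.comp_def, abs_cbrt] using habs.tendsto 0
  · refine habs.continuousAt.congr ?_
    filter_upwards [Ioi_mem_nhds hx] with y hy
    simp [cbrt, Real.sign_of_pos (show 0 < y from hy)]

lemma integral_comp_two_mul_sub_half (f : ℝ → ℝ) :
    ∫ u in (0:ℝ)..1, f (2 * (u - 1/2)) = (1/2) * ∫ v in (-1:ℝ)..1, f v := by
  have h : ∀ u : ℝ, 2 * (u - 1/2) = 2 * u + -1 := fun u => by ring
  simp_rw [h]
  rw [intervalIntegral.integral_comp_mul_add f two_ne_zero]
  norm_num

lemma integral_symm_of_odd {f : ℝ → ℝ} (hf : ∀ x, f (-x) = -f x) (a : ℝ) :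
    ∫ x in -a..a, f x = 0 := by
  have h := intervalIntegral.integral_comp_neg (a := -a) (b := a) f
  simp only [hf, intervalIntegral.integral_neg, neg_neg] at h
  linarith

lemma integral_symm_of_even {f : ℝ → ℝ} (hf : ∀ x, f (-x) = f x) (hc : Continuous f) (a : ℝ) :
    ∫ x in -a..a, f x = 2 * ∫ x in (0:ℝ)..a, f x := by
  have hneg : ∫ x in -a..0, f x = ∫ x in (0:ℝ)..a, f x := by
    simpa [hf] using (intervalIntegral.integral_comp_neg (a := 0) (b := a) f).symm
  rw [← intervalIntegral.integral_add_adjacent_intervals (b := 0)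
    (hc.intervalIntegrable _ _) (hc.intervalIntegrable _ _), hneg]
  ring

lemma integral_cubic_comp {g : ℝ → ℝ} (hg : Continuous g) (a b c₀ c₁ c₂ c₃ : ℝ) :
    ∫ u in a..b, (c₀ + c₁ * g u + c₂ * g u ^ 2 + c₃ * g u ^ 3) =
      (b - a) * c₀ + c₁ * (∫ u in a..b, g u) + c₂ * (∫ u in a..b, g u ^ 2)
        + c₃ * ∫ u in a..b, g u ^ 3 := by
  have hi : ∀ n : ℕ, ∀ c : ℝ, IntervalIntegrable (fun u => c * g u ^ n) volume a b :=
    fun n c => (continuous_const.mul (hg.pow n)).intervalIntegrable _ _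
  have h1 := hi 1 c₁
  simp only [pow_one] at h1
  rw [intervalIntegral.integral_add ((intervalIntegrable_const.add h1).add (hi 2 c₂)) (hi 3 c₃),
    intervalIntegral.integral_add (intervalIntegrable_const.add h1) (hi 2 c₂),
    intervalIntegral.integral_add intervalIntegrable_const h1, intervalIntegral.integral_const,
    intervalIntegral.integral_const_mul, intervalIntegral.integral_const_mul,
    intervalIntegral.integral_const_mul, smul_eq_mul]

lemma integral_cbrt_two_mul_sub_half :
    ∫ u in (0:ℝ)..1, cbrt (2 * (u - 1/2)) = 0 := by
  rw [integral_comp_two_mul_sub_half cbrt, integral_symm_of_odd cbrt_neg, mul_zero]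

lemma integral_cbrt_two_mul_sub_half_sq :
    ∫ u in (0:ℝ)..1, cbrt (2 * (u - 1/2)) ^ 2 = 3/5 := by
  have hsq : ∫ x in (0:ℝ)..1, cbrt x ^ 2 = 3/5 := by
    rw [intervalIntegral.integral_congr (g := fun x : ℝ => x ^ ((2:ℝ)/3)), integral_rpow]
    · norm_num
    · norm_num
    · intro x hx
      rw [uIcc_of_le zero_le_one] at hx
      simp only [cbrt_sq, abs_of_nonneg hx.1]
  rw [integral_comp_two_mul_sub_half (fun v => cbrt v ^ 2),
    integral_symm_of_even (f := fun v => cbrt v ^ 2) (fun x => by rw [cbrt_neg, neg_sq])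
      (continuous_cbrt.pow 2), hsq]
  norm_num

lemma integral_cbrt_two_mul_sub_half_pow_three :
    ∫ u in (0:ℝ)..1, cbrt (2 * (u - 1/2)) ^ 3 = 0 := by
  simp [cbrt_pow_three]

noncomputable def cbrtProfile (θ s t : ℝ) : ℝ := 5 / (6 * θ) * (1 + s * cbrt (2 * (t - 1/2)))

lemma integral_one_add_mul_cbrt_mul_sq (θ a s A : ℝ) :
    ∫ u in (0:ℝ)..1,
        (1 + θ * (a * cbrt (2 * (u - 1/2)))) * (A * (1 + s * cbrt (2 * (u - 1/2)))) ^ 2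
      = A ^ 2 * (1 + 3/5 * s ^ 2 + 6/5 * θ * a * s) := by
  have hexpand : ∀ b : ℝ, (1 + θ * (a * b)) * (A * (1 + s * b)) ^ 2 =
      A ^ 2 + (2 * A ^ 2 * s + θ * a * A ^ 2) * b + (A ^ 2 * s ^ 2 + 2 * θ * a * A ^ 2 * s) * b ^ 2
        + θ * a * A ^ 2 * s ^ 2 * b ^ 3 := fun b => by ring
  simp_rw [hexpand]
  rw [integral_cubic_comp (g := fun u => cbrt (2 * (u - 1/2))) (continuous_cbrt.comp (by fun_prop)),
    integral_cbrt_two_mul_sub_half, integral_cbrt_two_mul_sub_half_sq,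
    integral_cbrt_two_mul_sub_half_pow_three]
  ring

lemma integral_hammerstein_cbrtProfile {θ s : ℝ} (hθ : θ ≠ 0) (hs : s ^ 2 = (6 * θ - 5) / 3)
    (t : ℝ) :
    ∫ u in (0:ℝ)..1, (1 + θ * cbrt (4 * (t - 1/2) * (u - 1/2))) * cbrtProfile θ s u ^ 2
      = cbrtProfile θ s t := by
  have hkernel : ∀ u : ℝ, cbrt (4 * (t - 1/2) * (u - 1/2)) =
      cbrt (2 * (t - 1/2)) * cbrt (2 * (u - 1/2)) := fun u => by
    rw [← cbrt_mul]; ring_nf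
  simp_rw [hkernel, cbrtProfile]
  rw [integral_one_add_mul_cbrt_mul_sq, hs]
  field_simp
  ring

lemma cbrtProfile_pos {θ s t : ℝ} (hθ : 0 < θ) (hs : |s| < 1) (ht : t ∈ Icc (0:ℝ) 1) :
    0 < cbrtProfile θ s t := by
  have hb : |cbrt (2 * (t - 1/2))| ≤ 1 :=
    abs_cbrt_le_one (abs_le.mpr ⟨by linarith [ht.1], by linarith [ht.2]⟩)
  have hsb : |s * cbrt (2 * (t - 1/2))| < 1 := by
    rw [abs_mul]
    exact (mul_le_of_le_one_right (abs_nonneg s) hb).trans_lt hs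
  exact mul_pos (by positivity) (by linarith [neg_abs_le (s * cbrt (2 * (t - 1/2)))])

theorem stmt7 (θ : ℝ) (hθ0 : 5/6 < θ) (hθ1 : θ < 1) :
    let φ₂ : ℝ → ℝ := fun t => (5/(6*θ)) * (1 + Real.sqrt ((6*θ - 5)/3) * cbrt (2*(t - 1/2)))
    let φ₃ : ℝ → ℝ := fun t => (5/(6*θ)) * (1 - Real.sqrt ((6*θ - 5)/3) * cbrt (2*(t - 1/2)))
    (∀ t ∈ Icc (0:ℝ) 1, 0 < φ₂ t) ∧ (∀ t ∈ Icc (0:ℝ) 1, 0 < φ₃ t) ∧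
    (∀ t ∈ Icc (0:ℝ) 1,
      ∫ u in (0:ℝ)..1, (1 + θ * cbrt (4*(t - 1/2)*(u - 1/2))) * φ₂ u ^ 2 = φ₂ t) ∧
    (∀ t ∈ Icc (0:ℝ) 1,
      ∫ u in (0:ℝ)..1, (1 + θ * cbrt (4*(t - 1/2)*(u - 1/2))) * φ₃ u ^ 2 = φ₃ t) := by
  intro φ₂ φ₃
  have hφ₃ : φ₃ = cbrtProfile θ (-Real.sqrt ((6*θ - 5)/3)) :=
    funext fun t => by simp only [φ₃, cbrtProfile]; ring
  set s := Real.sqrt ((6*θ - 5)/3)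
  have hθ : 0 < θ := by linarith
  have hs : s ^ 2 = (6*θ - 5)/3 := Real.sq_sqrt (by linarith)
  have hs1 : |s| < 1 := sq_lt_one_iff_abs_lt_one s |>.mp (by linarith)
  have hφ₂ : φ₂ = cbrtProfile θ s := rfl
  rw [hφ₂, hφ₃]
  exact ⟨fun t => cbrtProfile_pos hθ hs1, fun t => cbrtProfile_pos hθ (by rwa [abs_neg]),
    fun t _ => integral_hammerstein_cbrtProfile hθ.ne' hs t,
    fun t _ => integral_hammerstein_cbrtProfile hθ.ne' (by rwa [neg_sq]) t⟩
end

section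
/- Let 0 < θ ≤ 5/9 and consider the system over ℝ²: x³ + (18/5)·(θ²/2^{1/3})·x·y² = x and (9/5)·θ·x²·y + (6/7)·(θ³/2^{1/3})·y³ = y. Then its solution set is exactly {(0,0), (−1,0), (1,0), (0, y₁⁺), (0, y₁⁻)}, where y₁^± = ±(2^{1/6}/θ)·√(7/(6θ)). -/
/-!
Away from the axes one may divide the first equation by `x` and the second by `y`, which leaves
a linear system in `x²` and `y²`. Eliminating `x²` gives `(984/175) θ³ y² = (9θ/5 - 1) c` with
`c = 2^{1/3}`, impossible for `θ ≤ 5/9` since the left side is positive. On the axes the system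
reduces to the one-variable cubics `x³ = x` and `(6/7)(θ³/c) y³ = y`.
-/

open MeasureTheory Set

lemma cbrt_of_pos {x : ℝ} (hx : 0 < x) : cbrt x = x ^ ((1:ℝ)/3) := by
  rw [cbrt, Real.sign_of_pos hx, abs_of_pos hx, one_mul]

lemma rpow_one_sixth_sq {a : ℝ} (ha : 0 ≤ a) : (a ^ ((1:ℝ)/6)) ^ 2 = a ^ ((1:ℝ)/3) := by
  rw [← Real.rpow_natCast, ← Real.rpow_mul ha]
  norm_num

lemma cube_eq_self_iff (x : ℝ) : x ^ 3 = x ↔ x = 0 ∨ x = -1 ∨ x = 1 := by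
  rw [← sub_eq_zero, show x ^ 3 - x = x * ((x + 1) * (x - 1)) by ring]
  simp only [mul_eq_zero, add_eq_zero_iff_eq_neg, sub_eq_zero]

section

variable {θ c r : ℝ}

lemma cubic_eq_self_iff (hθ : 0 < θ) (hc : 0 < c) (hr : 6 * θ ^ 3 * r ^ 2 = 7 * c) (y : ℝ) :
    (6/7) * (θ^3 / c) * y^3 = y ↔ y = 0 ∨ y = r ∨ y = -r := by
  have hfactor : (6/7) * (θ^3 / c) * y^3 - y = 6 * θ^3 / (7 * c) * (y * ((y - r) * (y + r))) := by
    field_simp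
    linear_combination y * hr
  rw [← sub_eq_zero, hfactor]
  simp only [mul_eq_zero, sub_eq_zero, add_eq_zero_iff_eq_neg, div_eq_zero_iff]
  have : θ ^ 3 ≠ 0 := by positivity
  simp [this, hc.ne']

lemma not_fixed_point_off_axes (hθ0 : 0 < θ) (hθ1 : θ ≤ 5/9) (hc : 0 < c) {x y : ℝ}
    (hx : x ≠ 0) (hy : y ≠ 0)
    (h1 : x^3 + (18/5) * (θ^2 / c) * x * y^2 = x)
    (h2 : (9/5) * θ * x^2 * y + (6/7) * (θ^3 / c) * y^3 = y) : False := by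
  have e1 : c * x^2 + (18/5) * θ^2 * y^2 = c := by
    apply mul_left_cancel₀ hx
    field_simp at h1 ⊢
    linear_combination h1
  have e2 : (9/5) * θ * c * x^2 + (6/7) * θ^3 * y^2 = c := by
    apply mul_left_cancel₀ hy
    field_simp at h2 ⊢
    linear_combination h2
  have hy2 : (984/175) * θ^3 * y^2 = ((9/5) * θ - 1) * c := by
    linear_combination (9/5) * θ * e1 - e2
  have hlhs : 0 < (984/175) * θ^3 * y^2 := by positivity
  nlinarith

theorem fixed_points_iff (hθ0 : 0 < θ) (hθ1 : θ ≤ 5/9) (hc : 0 < c)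
    (hr : 6 * θ ^ 3 * r ^ 2 = 7 * c) (x y : ℝ) :
    (x^3 + (18/5) * (θ^2 / c) * x * y^2 = x ∧
     (9/5) * θ * x^2 * y + (6/7) * (θ^3 / c) * y^3 = y) ↔
      ((x, y) = (0, 0) ∨ (x, y) = (-1, 0) ∨ (x, y) = (1, 0) ∨
       (x, y) = (0, r) ∨ (x, y) = (0, -r)) := by
  have on_y_axis := cubic_eq_self_iff hθ0 hc hr
  simp only [Prod.mk.injEq]
  constructor
  · rintro ⟨h1, h2⟩
    rcases eq_or_ne x 0 with rfl | hx
    · rcases (on_y_axis y).1 (by linear_combination h2) with rfl | rfl | rfl <;> simp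
    rcases eq_or_ne y 0 with rfl | hy
    · rcases (cube_eq_self_iff x).1 (by linear_combination h1) with rfl | rfl | rfl <;> simp_all
    exact (not_fixed_point_off_axes hθ0 hθ1 hc hx hy h1 h2).elim
  · rintro (⟨rfl, rfl⟩ | ⟨rfl, rfl⟩ | ⟨rfl, rfl⟩ | ⟨rfl, hy⟩ | ⟨rfl, hy⟩)
    · norm_num
    · norm_num
    · norm_num
    all_goals exact ⟨by ring, by linear_combination (on_y_axis y).2 (by simp [hy])⟩

end

theorem stmt9 (θ : ℝ) (hθ0 : 0 < θ) (hθ1 : θ ≤ 5/9) (x y : ℝ) :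
    (x^3 + (18/5) * (θ^2 / cbrt 2) * x * y^2 = x ∧
     (9/5) * θ * x^2 * y + (6/7) * (θ^3 / cbrt 2) * y^3 = y) ↔
      ((x, y) = (0, 0) ∨ (x, y) = (-1, 0) ∨ (x, y) = (1, 0) ∨
       (x, y) = (0, (2:ℝ)^((1:ℝ)/6) / θ * Real.sqrt (7/(6*θ))) ∨
       (x, y) = (0, -((2:ℝ)^((1:ℝ)/6) / θ * Real.sqrt (7/(6*θ))))) := by
  have hr : 6 * θ ^ 3 * ((2:ℝ)^((1:ℝ)/6) / θ * Real.sqrt (7/(6*θ))) ^ 2 = 7 * (2:ℝ)^((1:ℝ)/3) := by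
    rw [mul_pow, div_pow, Real.sq_sqrt (by positivity), rpow_one_sixth_sq zero_le_two]
    field_simp
  rw [cbrt_of_pos two_pos]
  exact fixed_points_iff hθ0 hθ1 (by positivity) hr x y
end

section
/- Let 5/9 < θ < 1. Then the system x³ + (18/5)·(θ²/2^{1/3})·x·y² = x, (9/5)·θ·x²·y + (6/7)·(θ³/2^{1/3})·y³ = y has exactly nine real solutions: (0,0), (±1,0), (0, ±y₁), (±x₁, ±y₂) (all four sign combinations), where y₁ = (2^{1/6}/θ)·√(7/(6θ)), x₁ = √(1 − (21/164)·(9θ−5)/θ), and y₂ = √(105/164)·(1/(θ·2^{1/3}))·√((9θ−5)/(9θ)). -/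
/-!
With `p = (18/5) θ²/∛2`, `q = (9/5) θ`, `r = (6/7) θ³/∛2`, the equations read
`x · (x² + p y² - 1) = 0` and `y · (q x² + r y² - 1) = 0`.
So a solution lies on an axis, or `(x², y²)` solves a 2 × 2 linear system whose determinant
`r - p q = -(984/175) θ³/∛2` does not vanish; its unique solution is `(x₁², y₂²)`,
and the bounds on `θ` make both entries positive.
-/

open MeasureTheory Set

lemma cbrt_pos {x : ℝ} (hx : 0 < x) : 0 < cbrt x := by
  rw [cbrt_of_pos hx]
  exact Real.rpow_pos_of_pos hx _

lemma cbrt_pow_three_of_pos {x : ℝ} (hx : 0 < x) : cbrt x ^ 3 = x := by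
  rw [cbrt_of_pos hx, ← Real.rpow_natCast, ← Real.rpow_mul hx.le]
  norm_num

lemma rpow_one_sixth_sq_s10 {x : ℝ} (hx : 0 < x) : (x ^ ((1:ℝ)/6)) ^ 2 = cbrt x := by
  rw [cbrt_of_pos hx, ← Real.rpow_natCast, ← Real.rpow_mul hx.le]
  norm_num

lemma cubic_system_iff {p q r X Y : ℝ} (hX : X + p * Y = 1) (hY : q * X + r * Y = 1)
    (hdet : p * q ≠ r) (x y : ℝ) :
    (x^3 + p * x * y^2 = x ∧ q * x^2 * y + r * y^3 = y) ↔
      (x = 0 ∧ y = 0) ∨ (x^2 = 1 ∧ y = 0) ∨ (x = 0 ∧ r * y^2 = 1) ∨ (x^2 = X ∧ y^2 = Y) := by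
  have hx_iff : x^3 + p * x * y^2 = x ↔ x = 0 ∨ x^2 + p * y^2 = 1 := by
    rw [← sub_eq_zero, show x^3 + p * x * y^2 - x = x * (x^2 + p * y^2 - 1) by ring,
      mul_eq_zero, sub_eq_zero]
  have hy_iff : q * x^2 * y + r * y^3 = y ↔ y = 0 ∨ q * x^2 + r * y^2 = 1 := by
    rw [← sub_eq_zero, show q * x^2 * y + r * y^3 - y = y * (q * x^2 + r * y^2 - 1) by ring,
      mul_eq_zero, sub_eq_zero]
  rw [hx_iff, hy_iff]
  constructor
  · rintro ⟨hx | hx, hy | hy⟩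
    · exact Or.inl ⟨hx, hy⟩
    · subst hx
      exact Or.inr (Or.inr (Or.inl ⟨rfl, by simpa using hy⟩))
    · subst hy
      exact Or.inr (Or.inl ⟨by simpa using hx, rfl⟩)
    · have hdet' : p * q - r ≠ 0 := sub_ne_zero.mpr hdet
      have hy2 : y^2 = Y := by
        have : (p * q - r) * (y^2 - Y) = 0 := by
          linear_combination q * hx - hy - q * hX + hY
        simpa [hdet', sub_eq_zero] using this
      exact Or.inr (Or.inr (Or.inr ⟨by linear_combination hx - p * hy2 - hX, hy2⟩))
  · rintro (⟨hx, hy⟩ | ⟨hx, hy⟩ | ⟨hx, hy⟩ | ⟨hx, hy⟩)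
    · exact ⟨Or.inl hx, Or.inl hy⟩
    · exact ⟨Or.inr (by simp [hx, hy]), Or.inl hy⟩
    · exact ⟨Or.inl hx, Or.inr (by simp [hx, hy])⟩
    · exact ⟨Or.inr (by rw [hx, hy, hX]), Or.inr (by rw [hx, hy, hY])⟩

lemma cubic_system_iff_of_sq {p q r x₁ y₁ y₂ : ℝ} (hy₁ : r * y₁^2 = 1)
    (hX : x₁^2 + p * y₂^2 = 1) (hY : q * x₁^2 + r * y₂^2 = 1) (hdet : p * q ≠ r) (x y : ℝ) :
    (x^3 + p * x * y^2 = x ∧ q * x^2 * y + r * y^3 = y) ↔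
      ((x, y) = (0, 0) ∨ (x, y) = (1, 0) ∨ (x, y) = (-1, 0) ∨
       (x, y) = (0, y₁) ∨ (x, y) = (0, -y₁) ∨
       (x, y) = (x₁, y₂) ∨ (x, y) = (x₁, -y₂) ∨ (x, y) = (-x₁, y₂) ∨ (x, y) = (-x₁, -y₂)) := by
  have axis : r * y^2 = 1 ↔ y^2 = y₁^2 := by
    rw [← hy₁, mul_right_inj' (left_ne_zero_of_mul_eq_one hy₁)]
  rw [cubic_system_iff hX hY hdet, axis]
  simp only [sq_eq_one_iff, sq_eq_sq_iff_eq_or_eq_neg, Prod.mk.injEq, or_and_right]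
  simp only [and_or_left, or_assoc]

theorem stmt10 (θ : ℝ) (hθ0 : 5/9 < θ) (hθ1 : θ < 1) (x y : ℝ) :
    (x^3 + (18/5) * (θ^2 / cbrt 2) * x * y^2 = x ∧
     (9/5) * θ * x^2 * y + (6/7) * (θ^3 / cbrt 2) * y^3 = y) ↔
      ((x, y) = (0, 0) ∨ (x, y) = (1, 0) ∨ (x, y) = (-1, 0) ∨
       (x, y) = (0, (2:ℝ)^((1:ℝ)/6) / θ * Real.sqrt (7/(6*θ))) ∨
       (x, y) = (0, -((2:ℝ)^((1:ℝ)/6) / θ * Real.sqrt (7/(6*θ)))) ∨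
       (x, y) = (Real.sqrt (1 - (21/164) * (9*θ - 5)/θ),
                 Real.sqrt (105/164) * (1/(θ * cbrt 2)) * Real.sqrt ((9*θ - 5)/(9*θ))) ∨
       (x, y) = (Real.sqrt (1 - (21/164) * (9*θ - 5)/θ),
                 -(Real.sqrt (105/164) * (1/(θ * cbrt 2)) * Real.sqrt ((9*θ - 5)/(9*θ)))) ∨
       (x, y) = (-Real.sqrt (1 - (21/164) * (9*θ - 5)/θ),
                 Real.sqrt (105/164) * (1/(θ * cbrt 2)) * Real.sqrt ((9*θ - 5)/(9*θ))) ∨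
       (x, y) = (-Real.sqrt (1 - (21/164) * (9*θ - 5)/θ),
                 -(Real.sqrt (105/164) * (1/(θ * cbrt 2)) * Real.sqrt ((9*θ - 5)/(9*θ))))) := by
  have hθ : 0 < θ := by linarith
  have hc : 0 < cbrt 2 := cbrt_pos two_pos
  have hc3 : cbrt 2 ^ 3 = 2 := cbrt_pow_three_of_pos two_pos
  have hx₁ : Real.sqrt (1 - (21/164) * (9*θ - 5)/θ) ^ 2 = 1 - (21/164) * (9*θ - 5)/θ := by
    refine Real.sq_sqrt ?_
    rw [sub_nonneg, div_le_one hθ]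
    linarith
  have hy₂ : (Real.sqrt (105/164) * (1/(θ * cbrt 2)) * Real.sqrt ((9*θ - 5)/(9*θ))) ^ 2 =
      105/164 * (1/(θ * cbrt 2))^2 * ((9*θ - 5)/(9*θ)) := by
    rw [mul_pow, mul_pow, Real.sq_sqrt (by norm_num),
      Real.sq_sqrt (div_nonneg (by linarith) (by linarith))]
  apply cubic_system_iff_of_sq
  · rw [mul_pow, div_pow, rpow_one_sixth_sq_s10 two_pos, Real.sq_sqrt (by positivity)]
    field_simp
  · rw [hx₁, hy₂]
    field_simp
    linear_combination (4725 - 8505 * θ) * hc3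
  · rw [hx₁, hy₂]
    field_simp
    linear_combination (7875 - 14175 * θ) * hc3
  · intro h
    have : θ^3 / cbrt 2 * (984/175) = 0 := by linear_combination h
    exact absurd this (by positivity)
end
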